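/- Let G be a linearly ordered abelian group, k a positive integer, α a full-dimensional system of linear inequalities in n variables, and t : Fin n → ℤ an integer linear form. If for every solution g : Fin n → G of α there exists h ∈ G with k • h = ∑ j, (t j) • g j, then for every tuple g : Fin n → G (solution or not) there exists h ∈ G with k • h = ∑ j, (t j) • g j. -/

import Mathlib

/-- A tuple `g` in a (pre)ordered abelian group is a solution of the system of linear
inequalities given by the integer matrix `L` if all the linear forms are nonnegative at `g`. -/
def IsSolution {r n : ℕ} (L : Fin r → Fin n → ℤ) {G : Type*} [AddCommGroup G] [Preorder G]
    (g : Fin n → G) : Prop :=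
  ∀ i : Fin r, 0 ≤ ∑ j, (L i j) • g j

/-- A system of linear inequalities is full-dimensional if no nonzero integer linear form
vanishes on all of its rational solutions. -/
def FullDimensional {r n : ℕ} (L : Fin r → Fin n → ℤ) : Prop :=
  ¬ ∃ a : Fin n → ℤ, a ≠ 0 ∧
      ∀ x : Fin n → ℚ, (∀ i : Fin r, 0 ≤ ∑ j, (L i j : ℚ) * x j) →
        ∑ j, (a j : ℚ) * x j = 0

/-!
Full-dimensionality provides an integer vector `w` on which every nonzero row of the system is
strictly positive: otherwise that row would be a nonzero form vanishing on all rational solutions.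
Given any `g`, choose `c ≥ 0` dominating the negative parts of the row values at `g`; then both
`g + w • c` and `w • c` are solutions, so `t` is divisible by `k` at both, hence at their
difference `g`.
-/

open Matrix

theorem Rat.exists_pos_nat_smul_eq_intCast {ι : Type*} [Fintype ι] (x : ι → ℚ) :
    ∃ N : ℕ, 0 < N ∧ ∃ w : ι → ℤ, (↑) ∘ w = (N : ℚ) • x := by
  refine ⟨∏ j, (x j).den, Finset.prod_pos fun j _ => (x j).pos,
    fun j => ((∏ j, (x j).den) / (x j).den : ℕ) * (x j).num, funext fun j => ?_⟩
  have hden : (x j).den ∣ ∏ j, (x j).den := Finset.dvd_prod_of_mem _ (Finset.mem_univ j)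
  have hden0 : ((x j).den : ℚ) ≠ 0 := by exact_mod_cast (x j).den_nz
  simp only [Function.comp_apply, Int.cast_mul, Int.cast_natCast, Pi.smul_apply, smul_eq_mul,
    Nat.cast_div hden hden0, ← Rat.mul_den_eq_num]
  field_simp

theorem Matrix.exists_mulVec_nonneg_forall_pos {m n R : Type*} [Fintype m] [Fintype n]
    [CommRing R] [PartialOrder R] [IsOrderedRing R] (A : Matrix m n R) (P : m → Prop)
    (h : ∀ i, P i → ∃ x, 0 ≤ A *ᵥ x ∧ 0 < (A *ᵥ x) i) :
    ∃ x, 0 ≤ A *ᵥ x ∧ ∀ i, P i → 0 < (A *ᵥ x) i := by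
  classical
  have h' : ∀ i, ∃ x, 0 ≤ A *ᵥ x ∧ (P i → 0 < (A *ᵥ x) i) := fun i =>
    if hi : P i then (h i hi).imp fun _ hx => ⟨hx.1, fun _ => hx.2⟩
    else ⟨0, by simp, fun hi' => absurd hi' hi⟩
  choose X hX_nonneg hX_pos using h'
  have hsum : A *ᵥ ∑ i, X i = ∑ i, A *ᵥ X i := mulVec_sum A Finset.univ X
  refine ⟨∑ i, X i, hsum ▸ Finset.sum_nonneg fun i _ => hX_nonneg i, fun i hi => ?_⟩
  rw [hsum, Finset.sum_apply]
  exact (hX_pos i hi).trans_le <|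
    Finset.single_le_sum (fun i' _ => hX_nonneg i' i) (Finset.mem_univ i)

variable {r n : ℕ} {L : Matrix (Fin r) (Fin n) ℤ}

theorem FullDimensional.exists_rat_mulVec_pos (hL : FullDimensional L) (i : Fin r)
    (hi : L i ≠ 0) :
    ∃ x : Fin n → ℚ, 0 ≤ L.map (↑) *ᵥ x ∧ 0 < (L.map (↑) *ᵥ x) i := by
  by_contra! h
  exact hL ⟨L i, hi, fun x hx => le_antisymm (h x hx) (hx i)⟩

theorem FullDimensional.exists_int_mulVec_pos (hL : FullDimensional L) :
    ∃ w : Fin n → ℤ, ∀ i, L i ≠ 0 → 0 < (L *ᵥ w) i := by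
  obtain ⟨x, -, hx_pos⟩ :=
    (L.map ((↑) : ℤ → ℚ)).exists_mulVec_nonneg_forall_pos _ hL.exists_rat_mulVec_pos
  obtain ⟨N, hN, w, hw⟩ := Rat.exists_pos_nat_smul_eq_intCast x
  have hcast : ∀ i, ((L *ᵥ w) i : ℚ) = N * (L.map (↑) *ᵥ x) i := fun i => by
    rw [← eq_intCast (Int.castRingHom ℚ), RingHom.map_mulVec]
    simp [hw, mulVec_smul]
  refine ⟨w, fun i hi => ?_⟩
  exact_mod_cast (hcast i).symm ▸ mul_pos (Nat.cast_pos.2 hN) (hx_pos i hi)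

theorem sum_zsmul_add_zsmul {G : Type*} [AddCommGroup G] (v w : Fin n → ℤ) (g : Fin n → G)
    (c : G) : ∑ j, v j • (g j + w j • c) = ∑ j, v j • g j + (v ⬝ᵥ w) • c := by
  simp only [smul_add, smul_smul, Finset.sum_add_distrib, dotProduct, Finset.sum_smul]

theorem isSolution_add_zsmul {G : Type*} [AddCommGroup G] [LinearOrder G] [IsOrderedAddMonoid G]
    {w : Fin n → ℤ} (hpos : ∀ i, L i ≠ 0 → 0 < (L *ᵥ w) i)
    {g : Fin n → G} {c : G} (hc : 0 ≤ c) (hgc : ∀ i, -∑ j, L i j • g j ≤ c) :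
    IsSolution L fun j => g j + w j • c := by
  intro i
  rw [sum_zsmul_add_zsmul]
  by_cases hi : L i = 0
  · simp [hi]
  · have : c ≤ (L *ᵥ w) i • c := by
      simpa using zsmul_le_zsmul_left hc (hpos i hi)
    exact neg_le_iff_add_nonneg'.1 ((hgc i).trans this)

theorem divisibility_on_solutions_extends_general {r n : ℕ} (G : Type) [AddCommGroup G] [LinearOrder G] [IsOrderedAddMonoid G]
    (k : ℕ) (α : Fin r → Fin n → ℤ) (hα : FullDimensional α) (t : Fin n → ℤ)
    (hdiv : ∀ g : Fin n → G, IsSolution α g → ∃ h : G, k • h = ∑ j, (t j) • g j) :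
    ∀ g : Fin n → G, ∃ h : G, k • h = ∑ j, (t j) • g j := by
  intro g
  obtain ⟨w, hpos⟩ := hα.exists_int_mulVec_pos
  obtain ⟨M, hM⟩ := Finite.exists_le fun i => -∑ j, α i j • g j
  have hc : 0 ≤ max M 0 := le_max_right _ _
  obtain ⟨h₁, hh₁⟩ := hdiv _ <|
    isSolution_add_zsmul hpos hc fun i => (hM i).trans (le_max_left _ _)
  obtain ⟨h₂, hh₂⟩ := hdiv _ <| isSolution_add_zsmul (g := 0) hpos hc fun i => by simp [hc]
  refine ⟨h₁ - h₂, ?_⟩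
  rw [smul_sub, hh₁, hh₂, sum_zsmul_add_zsmul, sum_zsmul_add_zsmul]
  simp

/-- If the value of an integer linear form `t` is divisible by `k` at every solution of a
full-dimensional system of linear inequalities in a linearly ordered abelian group `G`,
then it is divisible by `k` at every tuple of `G`. -/
theorem divisibility_on_solutions_extends {r n : ℕ} (G : Type) [AddCommGroup G] [LinearOrder G] [IsOrderedAddMonoid G]
    (k : ℕ) (hk : 0 < k) (α : Fin r → Fin n → ℤ) (hα : FullDimensional α) (t : Fin n → ℤ)
    (hdiv : ∀ g : Fin n → G, IsSolution α g → ∃ h : G, k • h = ∑ j, (t j) • g j) :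
    ∀ g : Fin n → G, ∃ h : G, k • h = ∑ j, (t j) • g j :=
  divisibility_on_solutions_extends_general G k α hα t hdiv
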